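/- arXiv:2512.05454 — 5 statements merged into one kernel-verified Lean document; each statement's English description precedes it below -/
import Mathlib

section
/- For all real numbers a, b > 0 and all natural numbers m, n: m + n + 2mn + Σ_{i=1}^{m} (2⌊i·a/b⌋ + 1) + Σ_{j=1}^{n} (2⌊j·b/a⌋ + 1) = 2·(N(a,b; am+bn) − 1). (This expresses the ECH index of the orbit set γ₁^m γ₂^n on the boundary of the ellipsoid E(a,b) as twice the number of lattice points in the triangle bounded by the coordinate axes and the line through (m,n) of slope −a/b, minus one.) -/
/-!
Raising the level from `T` to `T + a` shifts every lattice point of the triangle one step to the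
right and adds the column `x = 0`, which has `⌊(T + a) / b⌋ + 1` points. At `T = a m + b n` that
column count is `⌊(m + 1) a / b⌋ + n + 1`, so induction on `m` yields the first sum and `2 m n`
(from `2 n` per step); the base `m = 0` is the same induction in the other variable, after
exchanging the roles of `a` and `b`, starting from the single point at level `0`.
-/

noncomputable def latN (a b T : ℝ) : ℕ :=
  Set.ncard {p : ℕ × ℕ | a * p.1 + b * p.2 ≤ T}

lemma Nat.finite_setOf_mul_le {b : ℝ} (hb : 0 < b) (S : ℝ) :
    {y : ℕ | b * y ≤ S}.Finite :=
  (Set.finite_Iic ⌊S / b⌋₊).subset fun y hy =>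
    Nat.le_floor ((le_div_iff₀ hb).2 (by rw [mul_comm]; exact hy))

lemma Nat.ncard_setOf_mul_le {b S : ℝ} (hb : 0 < b) (hS : 0 ≤ S) :
    {y : ℕ | b * y ≤ S}.ncard = ⌊S / b⌋₊ + 1 := by
  have hIic : {y : ℕ | b * y ≤ S} = Set.Iic ⌊S / b⌋₊ := by
    ext y
    rw [Set.mem_Iic, Nat.le_floor_iff (div_nonneg hS hb.le), le_div_iff₀ hb, mul_comm]
    rfl
  rw [hIic, ← Finset.coe_Iic, Set.ncard_coe_finset, Nat.card_Iic]

lemma finite_setOf_mul_add_mul_le {a b : ℝ} (ha : 0 < a) (hb : 0 < b) (T : ℝ) :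
    {p : ℕ × ℕ | a * p.1 + b * p.2 ≤ T}.Finite := by
  refine ((Nat.finite_setOf_mul_le ha T).prod (Nat.finite_setOf_mul_le hb T)).subset ?_
  rintro ⟨x, y⟩ (h : a * x + b * y ≤ T)
  have hx : 0 ≤ a * x := by positivity
  have hy : 0 ≤ b * y := by positivity
  exact ⟨show a * x ≤ T by linarith, show b * y ≤ T by linarith⟩

lemma latN_zero {a b : ℝ} (ha : 0 < a) (hb : 0 < b) : latN a b 0 = 1 := by
  have hsingle : {p : ℕ × ℕ | a * p.1 + b * p.2 ≤ 0} = {(0, 0)} := by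
    ext ⟨x, y⟩
    have hx : 0 ≤ a * x := by positivity
    have hy : 0 ≤ b * y := by positivity
    simp only [Set.mem_ofPred_eq, Set.mem_singleton_iff, Prod.mk.injEq]
    constructor
    · intro h
      have hx0 : a * x = 0 := by linarith
      have hy0 : b * y = 0 := by linarith
      simpa [ha.ne', hb.ne'] using And.intro hx0 hy0
    · rintro ⟨rfl, rfl⟩
      simp
  rw [latN, hsingle, Set.ncard_singleton]

lemma latN_comm (a b T : ℝ) : latN a b T = latN b a T := by
  have hswap : {p : ℕ × ℕ | b * p.1 + a * p.2 ≤ T}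
      = Prod.swap '' {p : ℕ × ℕ | a * p.1 + b * p.2 ≤ T} := by
    rw [Set.image_swap_eq_preimage_swap]
    ext ⟨x, y⟩
    simp [add_comm]
  rw [latN, latN, hswap, Set.ncard_image_of_injective _ Prod.swap_injective]

lemma latN_add_left {a b : ℝ} (ha : 0 < a) (hb : 0 < b) (T : ℝ) :
    latN a b (T + a) = latN a b T + {y : ℕ | b * y ≤ T + a}.ncard := by
  have hsplit : {p : ℕ × ℕ | a * p.1 + b * p.2 ≤ T + a}
      = Prod.mk 0 '' {y : ℕ | b * y ≤ T + a}
        ∪ Prod.map (· + 1) id '' {p : ℕ × ℕ | a * p.1 + b * p.2 ≤ T} := by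
    ext ⟨x, y⟩
    cases x with
    | zero => simp
    | succ x =>
      simp only [Set.mem_ofPred_eq, Nat.cast_add, Nat.cast_one, Prod.map, id_eq, Set.mem_union,
        Set.mem_image, Prod.mk.injEq, Nat.right_eq_add, Nat.add_eq_zero_iff, one_ne_zero,
        and_false, false_and, exists_const, Nat.add_right_cancel_iff, Prod.exists,
        exists_eq_right_right, exists_eq_right, false_or]
      constructor <;> intro h <;> linarith
  have hdisj : Disjoint (Prod.mk 0 '' {y : ℕ | b * y ≤ T + a})
      (Prod.map (· + 1) id '' {p : ℕ × ℕ | a * p.1 + b * p.2 ≤ T}) := by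
    rw [Set.disjoint_left]
    rintro _ ⟨y, -, rfl⟩ ⟨⟨x, y'⟩, -, h⟩
    simp [Prod.map] at h
  have hinj : Function.Injective (Prod.map (· + 1) id : ℕ × ℕ → ℕ × ℕ) :=
    Prod.map_injective.2 ⟨add_left_injective 1, Function.injective_id⟩
  rw [latN, latN, hsplit, Set.ncard_union_eq hdisj
    ((Nat.finite_setOf_mul_le hb _).image _) ((finite_setOf_mul_add_mul_le ha hb T).image _),
    Set.ncard_image_of_injective _ (Prod.mk_right_injective 0),
    Set.ncard_image_of_injective _ hinj, add_comm]

lemma Int.floor_mul_add_mul_div {a b : ℝ} (hb : 0 < b) (m n : ℕ) :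
    ⌊(a * m + b * n) / b⌋ = ⌊m * a / b⌋ + n := by
  rw [← Int.floor_add_natCast]
  congr 1
  field_simp

lemma two_mul_latN_mul_add_mul {a b : ℝ} (ha : 0 < a) (hb : 0 < b) (m n : ℕ) :
    2 * (latN a b (a * m + b * n) : ℤ) = 2 * latN a b (b * n) + m + 2 * m * n
        + ∑ i ∈ Finset.Icc 1 m, (2 * ⌊(i : ℝ) * a / b⌋ + 1) := by
  induction m with
  | zero => simp
  | succ m ih =>
    have hstep : latN a b (a * m + b * n + a)
        = latN a b (a * m + b * n) + (⌊(a * m + b * n + a) / b⌋₊ + 1) := by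
      rw [latN_add_left ha hb, Nat.ncard_setOf_mul_le hb (by positivity)]
    have hfloor : (⌊(a * m + b * n + a) / b⌋₊ : ℤ) = ⌊((m + 1 : ℕ) : ℝ) * a / b⌋ + n := by
      rw [Int.natCast_floor_eq_floor (by positivity), ← Int.floor_mul_add_mul_div hb]
      push_cast
      ring_nf
    rw [Nat.cast_succ, mul_add_one, add_right_comm, hstep,
      Finset.sum_Icc_succ_top (Nat.le_add_left 1 m)]
    push_cast at hfloor ⊢
    linarith

/-- The ECH index of the orbit set `γ₁^m γ₂^n` on the boundary of the ellipsoid `E(a,b)`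
equals twice the number of lattice points in the triangle bounded by the axes and the line
through `(m,n)` of slope `−a/b`, minus one:
`m + n + 2mn + Σ_{i=1}^m (2⌊ia/b⌋+1) + Σ_{j=1}^n (2⌊jb/a⌋+1) = 2(N(a,b;am+bn) − 1)`. -/
theorem ech_index_ellipsoid_lattice_count (a b : ℝ) (ha : 0 < a) (hb : 0 < b) (m n : ℕ) :
    (m : ℤ) + n + 2 * m * n
        + ∑ i ∈ Finset.Icc 1 m, (2 * ⌊(i : ℝ) * a / b⌋ + 1)
        + ∑ j ∈ Finset.Icc 1 n, (2 * ⌊(j : ℝ) * b / a⌋ + 1)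
      = 2 * ((latN a b (a * m + b * n) : ℤ) - 1) := by
  have hcolumn := two_mul_latN_mul_add_mul hb ha n 0
  simp only [CharP.cast_eq_zero, mul_zero, add_zero, latN_zero hb ha, Nat.cast_one] at hcolumn
  rw [← latN_comm] at hcolumn
  have hrows := two_mul_latN_mul_add_mul ha hb m n
  linarith
end

section
/- Let a, b > 0 be real numbers with a/b irrational. Then the map ℕ × ℕ → ℕ sending (m,n) to N(a,b; am+bn) is a bijection onto the set of positive integers {1, 2, 3, …}. (Equivalently: for each k ≥ 0 there is exactly one ECH generator of the irrational ellipsoid E(a,b) of ECH index 2k, and these generators come in order of their action.) -/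
section Aux

variable {a b : ℝ}

private lemma lat_finite (ha : 0 < a) (hb : 0 < b) (T : ℝ) :
    {p : ℕ × ℕ | a * p.1 + b * p.2 ≤ T}.Finite := by
  apply Set.Finite.subset ((Set.finite_Iic ⌊T / a⌋₊).prod (Set.finite_Iic ⌊T / b⌋₊))
  rintro ⟨x, y⟩ h
  simp only [Set.mem_setOf_eq] at h
  have hx : (x : ℝ) ≤ T / a := by
    rw [le_div_iff₀ ha]
    nlinarith [mul_nonneg hb.le (Nat.cast_nonneg y)]
  have hy : (y : ℝ) ≤ T / b := by
    rw [le_div_iff₀ hb]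
    nlinarith [mul_nonneg ha.le (Nat.cast_nonneg x)]
  exact ⟨Nat.le_floor hx, Nat.le_floor hy⟩

private lemma f_inj (ha : 0 < a) (hb : 0 < b) (hirr : Irrational (a / b)) :
    Function.Injective (fun p : ℕ × ℕ => a * p.1 + b * p.2) := by
  rintro ⟨m, n⟩ ⟨m', n'⟩ h
  simp only at h
  by_cases hm : m = m'
  · subst hm
    have hn : (n : ℝ) = n' := by
      have := mul_left_cancel₀ hb.ne' (by linarith : b * (n : ℝ) = b * n')
      exact this
    have : n = n' := Nat.cast_injective hn
    simp [this]
  · exfalso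
    have hmm : ((m : ℝ) - m') ≠ 0 := by
      intro h0
      exact hm (by exact_mod_cast sub_eq_zero.mp h0)
    apply hirr
    refine ⟨(((n' : ℤ) - n) / ((m : ℤ) - m') : ℚ), ?_⟩
    push_cast
    rw [div_eq_div_iff hmm hb.ne']
    ring_nf
    nlinarith [h]

end Aux

/-- For an irrational ellipsoid (`a/b` irrational), the map `(m,n) ↦ N(a,b; am+bn)` is a
bijection from `ℕ × ℕ` onto the positive integers: for each `k ≥ 0` there is exactly one
ECH generator of `∂E(a,b)` of ECH index `2k`, and the generators come in order of their
action. -/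
theorem irrational_ellipsoid_generators_bijection (a b : ℝ) (ha : 0 < a) (hb : 0 < b)
    (hirr : Irrational (a / b)) :
    Set.BijOn (fun p : ℕ × ℕ => latN a b (a * p.1 + b * p.2))
      Set.univ {k : ℕ | 1 ≤ k} := by
  set f : ℕ × ℕ → ℝ := fun p => a * p.1 + b * p.2 with hf
  have hfin : ∀ T : ℝ, {q : ℕ × ℕ | f q ≤ T}.Finite := fun T => lat_finite ha hb T
  have hinj : Function.Injective f := f_inj ha hb hirr
  have hlat : ∀ p : ℕ × ℕ, latN a b (f p) = Set.ncard {q : ℕ × ℕ | f q ≤ f p} := fun p => rfl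
  -- every value is ≥ 1
  have hpos : ∀ p : ℕ × ℕ, 1 ≤ latN a b (f p) := by
    intro p
    rw [hlat]
    have : p ∈ {q : ℕ × ℕ | f q ≤ f p} := Set.mem_setOf_eq ▸ le_refl (f p)
    exact (Set.ncard_pos (hfin _)).mpr ⟨p, this⟩
  -- injectivity of the rank map
  have hrank_inj : ∀ p q : ℕ × ℕ, latN a b (f p) = latN a b (f q) → p = q := by
    have key : ∀ p q : ℕ × ℕ, f p ≤ f q →
        latN a b (f p) = latN a b (f q) → p = q := by
      intro p q hle heq
      have hsub : {r : ℕ × ℕ | f r ≤ f p} ⊆ {r : ℕ × ℕ | f r ≤ f q} :=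
        fun r hr => le_trans hr hle
      have hset : {r : ℕ × ℕ | f r ≤ f p} = {r : ℕ × ℕ | f r ≤ f q} := by
        apply Set.eq_of_subset_of_ncard_le hsub _ (hfin _)
        rw [← hlat, ← hlat, heq]
      have hq : q ∈ {r : ℕ × ℕ | f r ≤ f p} := by
        rw [hset]; exact Set.mem_setOf_eq ▸ le_refl (f q)
      exact hinj (le_antisymm hle hq)
    intro p q heq
    rcases le_total (f p) (f q) with h | h
    · exact key p q h heq
    · exact (key q p h heq.symm).symm
  -- surjectivity: every k ≥ 1 is attained
  have hsurj : ∀ k : ℕ, 1 ≤ k → ∃ p : ℕ × ℕ, latN a b (f p) = k := by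
    intro k hk
    induction k with
    | zero => omega
    | succ k ih =>
      rcases Nat.eq_or_lt_of_le hk with h1 | h1
      · -- k + 1 = 1 : base case, take p = (0,0)
        refine ⟨(0, 0), ?_⟩
        have hf0 : f (0, 0) = 0 := by simp [hf]
        rw [hf0, show latN a b 0 = Set.ncard {q : ℕ × ℕ | f q ≤ 0} from rfl]
        have hset : {q : ℕ × ℕ | f q ≤ 0} = {(0, 0)} := by
          ext ⟨x, y⟩
          simp only [Set.mem_setOf_eq, Set.mem_singleton_iff, Prod.mk.injEq]
          constructor
          · intro hxy
            simp only [hf] at hxy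
            have hxn : (0 : ℝ) ≤ x := Nat.cast_nonneg x
            have hyn : (0 : ℝ) ≤ y := Nat.cast_nonneg y
            have hx0 : (x : ℝ) = 0 := by
              nlinarith [mul_nonneg ha.le hxn, mul_nonneg hb.le hyn]
            have hy0 : (y : ℝ) = 0 := by
              nlinarith [mul_nonneg ha.le hxn, mul_nonneg hb.le hyn]
            exact ⟨by exact_mod_cast hx0, by exact_mod_cast hy0⟩
          · rintro ⟨rfl, rfl⟩; simp [hf]
        rw [hset, Set.ncard_singleton]
        omega
      · -- successor step
        obtain ⟨p, hp⟩ := ih (by omega)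
        set c : ℕ × ℕ := (p.1 + 1, p.2) with hc
        have hfc : f p < f c := by
          simp only [hf, hc]
          push_cast
          nlinarith
        set A : Set (ℕ × ℕ) := {q | f p < f q ∧ f q ≤ f c} with hA
        have hAfin : A.Finite := (hfin (f c)).subset fun q hq => hq.2
        have hAne : A.Nonempty := ⟨c, hfc, le_refl _⟩
        obtain ⟨p', hp'A, hp'min⟩ := Set.exists_min_image A f hAfin hAne
        refine ⟨p', ?_⟩
        have hset : {q : ℕ × ℕ | f q ≤ f p'} = insert p' {q : ℕ × ℕ | f q ≤ f p} := by
          ext q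
          simp only [Set.mem_setOf_eq, Set.mem_insert_iff]
          constructor
          · intro hq
            by_cases hqp : f q ≤ f p
            · exact Or.inr hqp
            · left
              have hqA : q ∈ A := ⟨lt_of_not_ge hqp, le_trans hq hp'A.2⟩
              exact hinj (le_antisymm hq (hp'min q hqA))
          · rintro (rfl | hq)
            · exact le_refl _
            · exact le_trans hq hp'A.1.le
        have hnm : p' ∉ {q : ℕ × ℕ | f q ≤ f p} := fun h => absurd h (not_le.mpr hp'A.1)
        rw [hlat, hset, Set.ncard_insert_of_notMem hnm (hfin _), ← hlat, hp]
  refine ⟨fun p _ => hpos p, fun p _ q _ h => hrank_inj p q h, ?_⟩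
  intro k hk
  obtain ⟨p, hp⟩ := hsurj k hk
  exact ⟨p, Set.mem_univ p, hp⟩
end

section
/- For all real numbers a, b > 0, defining c_k(a,b) := inf{T ≥ 0 : N(a,b;T) ≥ k+1} (the (k+1)-st smallest element, counted with multiplicity, of the collection {am + bn : (m,n) ∈ ℕ × ℕ}), one has lim_{k→∞} c_k(a,b)²/k = 2ab. (This is the Weyl law for the ECH capacities of the ellipsoid E(a,b), whose k-th ECH capacity equals c_k(a,b).) -/
/-- `ck a b k` is the `(k+1)`-st smallest element, counted with multiplicity, of the
collection `{a·m + b·n : (m,n) ∈ ℕ × ℕ}`; these are the ECH capacities of the ellipsoid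
`E(a,b)`. -/
noncomputable def ck (a b : ℝ) (k : ℕ) : ℝ :=
  sInf {T : ℝ | 0 ≤ T ∧ k + 1 ≤ latN a b T}

open Filter Finset

theorem sum_range_sub_mul_mul_two (c a : ℝ) (n : ℕ) :
    (∑ x ∈ range n, (c - a * x)) * 2 = n * (2 * c - a * (n - 1)) := by
  induction n with
  | zero => simp
  | succ n ih => rw [sum_range_succ, add_mul, ih]; push_cast; ring

variable {a b c T : ℝ}

theorem mem_range_floor_div_add_one_iff (hb : 0 < b) (hc : 0 ≤ c) {n : ℕ} :
    n ∈ range (⌊c / b⌋₊ + 1) ↔ b * n ≤ c := by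
  rw [mem_range, Nat.lt_succ_iff, Nat.le_floor_iff (div_nonneg hc hb.le), le_div_iff₀' hb]

theorem lt_mul_floor_div_add_one (hb : 0 < b) : c < b * (⌊c / b⌋₊ + 1) := by
  have := Nat.lt_floor_add_one (c / b)
  rwa [div_lt_iff₀' hb] at this

theorem mul_floor_div_add_one_le (hb : 0 < b) (hc : 0 ≤ c) : b * (⌊c / b⌋₊ + 1) ≤ c + b := by
  have := Nat.floor_le (div_nonneg hc hb.le)
  rw [le_div_iff₀' hb] at this
  linarith

theorem latN_eq_sum (ha : 0 < a) (hb : 0 < b) (hT : 0 ≤ T) :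
    latN a b T = ∑ x ∈ range (⌊T / a⌋₊ + 1), (⌊(T - a * x) / b⌋₊ + 1) := by
  have hset : {p : ℕ × ℕ | a * p.1 + b * p.2 ≤ T} =
      ↑((range (⌊T / a⌋₊ + 1)).biUnion fun x => {x} ×ˢ range (⌊(T - a * x) / b⌋₊ + 1)) := by
    ext ⟨x, y⟩
    simp only [Set.mem_ofPred_eq, coe_biUnion, mem_coe, Set.mem_iUnion, mem_product,
      mem_singleton, exists_prop, mem_range_floor_div_add_one_iff ha hT]
    constructor
    · intro h
      have hx : a * x ≤ T := by nlinarith [Nat.cast_nonneg (α := ℝ) y]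
      exact ⟨x, hx, rfl, (mem_range_floor_div_add_one_iff hb (sub_nonneg.2 hx)).2 (by linarith)⟩
    · rintro ⟨_, hx, rfl, hy⟩
      have := (mem_range_floor_div_add_one_iff hb (sub_nonneg.2 hx)).1 hy
      linarith
  rw [latN, hset, Set.ncard_coe_finset, card_biUnion]
  · simp
  · intro x _ x' _ hxx'
    simp only [Function.onFun, disjoint_left, mem_product, mem_singleton]
    rintro p ⟨rfl, -⟩ ⟨h, -⟩
    exact hxx' h

theorem two_mul_mul_latN_mem_Icc (ha : 0 < a) (hb : 0 < b) (hT : 0 ≤ T) :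
    2 * a * b * latN a b T ∈ Set.Icc (a * (⌊T / a⌋₊ + 1) * (2 * T - a * ⌊T / a⌋₊))
      (a * (⌊T / a⌋₊ + 1) * (2 * T - a * ⌊T / a⌋₊ + 2 * b)) := by
  set X := ⌊T / a⌋₊
  have hsum := sum_range_sub_mul_mul_two T a (X + 1)
  have hN : b * (latN a b T : ℝ) = ∑ x ∈ range (X + 1), b * (⌊(T - a * x) / b⌋₊ + 1) := by
    rw [latN_eq_sum ha hb hT, ← mul_sum]; push_cast; rfl
  have hlow : ∑ x ∈ range (X + 1), (T - a * x) ≤ b * latN a b T :=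
    hN ▸ sum_le_sum fun x _ => (lt_mul_floor_div_add_one hb).le
  have hup : b * latN a b T ≤ ∑ x ∈ range (X + 1), (T - a * x + b) := by
    refine hN ▸ sum_le_sum fun x hx => mul_floor_div_add_one_le hb ?_
    exact sub_nonneg.2 ((mem_range_floor_div_add_one_iff ha hT).1 hx)
  rw [sum_add_distrib, sum_const, card_range, nsmul_eq_mul] at hup
  push_cast at hsum hup
  constructor <;> nlinarith

theorem sq_le_two_mul_mul_latN (ha : 0 < a) (hb : 0 < b) (hT : 0 ≤ T) :
    T ^ 2 ≤ 2 * a * b * latN a b T := by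
  have hX := Nat.floor_le (div_nonneg hT ha.le)
  have hX' := Nat.lt_floor_add_one (T / a)
  rw [le_div_iff₀' ha] at hX
  rw [div_lt_iff₀' ha] at hX'
  nlinarith [(two_mul_mul_latN_mem_Icc ha hb hT).1]

theorem two_mul_mul_latN_le_sq (ha : 0 < a) (hb : 0 < b) (hT : 0 ≤ T) :
    2 * a * b * latN a b T ≤ (T + a + b) ^ 2 := by
  have hX := Nat.floor_le (div_nonneg hT ha.le)
  rw [le_div_iff₀' ha] at hX
  set u := a * ⌊T / a⌋₊
  calc 2 * a * b * latN a b T ≤ (u + a) * (2 * T - u + 2 * b) := by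
        linarith [(two_mul_mul_latN_mem_Icc ha hb hT).2]
    _ ≤ (T + a / 2 + b) ^ 2 := by nlinarith [sq_nonneg (2 * u + a - 2 * T - 2 * b)]
    _ ≤ (T + a + b) ^ 2 := by gcongr; linarith

theorem sqrt_mem_setOf_le_latN (ha : 0 < a) (hb : 0 < b) (k : ℕ) :
    √(2 * a * b * (k + 1)) ∈ {T : ℝ | 0 ≤ T ∧ k + 1 ≤ latN a b T} := by
  refine ⟨Real.sqrt_nonneg _, ?_⟩
  have h := sq_le_two_mul_mul_latN ha hb (Real.sqrt_nonneg (2 * a * b * (k + 1)))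
  rw [Real.sq_sqrt (by positivity)] at h
  exact_mod_cast le_of_mul_le_mul_left h (by positivity)

theorem ck_le_sqrt (ha : 0 < a) (hb : 0 < b) (k : ℕ) : ck a b k ≤ √(2 * a * b * (k + 1)) :=
  csInf_le ⟨0, fun _ hT => hT.1⟩ (sqrt_mem_setOf_le_latN ha hb k)

theorem sqrt_sub_le_ck (ha : 0 < a) (hb : 0 < b) (k : ℕ) :
    √(2 * a * b * (k + 1)) - (a + b) ≤ ck a b k := by
  refine le_csInf ⟨_, sqrt_mem_setOf_le_latN ha hb k⟩ fun T ⟨hT, hk⟩ => ?_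
  have hk' : (k + 1 : ℝ) ≤ latN a b T := by exact_mod_cast hk
  have h : 2 * a * b * (k + 1) ≤ (T + a + b) ^ 2 :=
    (mul_le_mul_of_nonneg_left hk' (by positivity)).trans (two_mul_mul_latN_le_sq ha hb hT)
  linarith [(Real.sqrt_le_left (by positivity)).2 h]

theorem abs_ck_sub_sqrt_le (ha : 0 < a) (hb : 0 < b) (k : ℕ) :
    |ck a b k - √(2 * a * b * k)| ≤ a + b := by
  have hmono : √(2 * a * b * k) ≤ √(2 * a * b * (k + 1)) := by gcongr; linarith
  -- `√(2ab(k+1)) ≤ √(2abk) + √(2ab)` and `2ab ≤ (a + b)²`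
  have hstep : √(2 * a * b * (k + 1)) ≤ √(2 * a * b * k) + (a + b) := by
    rw [Real.sqrt_le_left (by positivity)]
    nlinarith [Real.sq_sqrt (by positivity : (0 : ℝ) ≤ 2 * a * b * k),
      Real.sqrt_nonneg (2 * a * b * k), sq_nonneg (a - b)]
  rw [abs_le]
  constructor <;> linarith [ck_le_sqrt ha hb k, sqrt_sub_le_ck ha hb k]

theorem tendsto_sq_div_of_abs_sub_sqrt_le {f : ℕ → ℝ} {c C : ℝ} (hc : 0 ≤ c)
    (hf : ∀ k, |f k - √(c * k)| ≤ C) : Tendsto (fun k : ℕ => f k ^ 2 / k) atTop (nhds c) := by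
  have hsqrt : Tendsto (fun k : ℕ => √(k : ℝ)) atTop atTop :=
    Real.tendsto_sqrt_atTop.comp tendsto_natCast_atTop_atTop
  have hlim : Tendsto (fun k : ℕ => f k / √k) atTop (nhds √c) := by
    rw [← tendsto_sub_nhds_zero_iff, tendsto_zero_iff_abs_tendsto_zero]
    refine squeeze_zero' (.of_forall fun _ => abs_nonneg _) ?_
      (tendsto_const_nhds.div_atTop hsqrt : Tendsto (fun k : ℕ => C / √k) atTop (nhds 0))
    filter_upwards [eventually_gt_atTop 0] with k hk
    have hk' : 0 < √(k : ℝ) := Real.sqrt_pos.2 (by exact_mod_cast hk)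
    rw [Function.comp_apply, show f k / √k - √c = (f k - √(c * k)) / √k by
      rw [Real.sqrt_mul hc]; field_simp, abs_div, abs_of_pos hk']
    gcongr
    exact hf k
  simpa only [div_pow, Real.sq_sqrt (Nat.cast_nonneg _), Real.sq_sqrt hc] using hlim.pow 2

/-- The Weyl law for the ECH capacities of the ellipsoid `E(a,b)`:
`lim_{k→∞} c_k(a,b)²/k = 2ab`. -/
theorem ellipsoid_capacities_weyl_law (a b : ℝ) (ha : 0 < a) (hb : 0 < b) :
    Filter.Tendsto (fun k : ℕ => (ck a b k) ^ 2 / (k : ℝ))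
      Filter.atTop (nhds (2 * a * b)) :=
  tendsto_sq_div_of_abs_sub_sqrt_le (by positivity) (abs_ck_sub_sqrt_le ha hb)
end

section
/- For every natural number d and every natural number k with d(d+1)/2 ≤ k ≤ d(d+3)/2, one has c_k(1,1) = d. Consequently the sequence (c_k(1,1))_{k≥0} is 0, 1, 1, 2, 2, 2, 3, 3, 3, 3, …, each integer d occurring exactly d+1 times. (These are the ECH capacities of the ball B_4(1).) -/
/-!
For `T ≥ 0` the lattice points with `x + y ≤ T` are those with `x + y ≤ n := ⌊T⌋₊`; sorting
them by the antidiagonal they lie on gives `1 + 2 + ⋯ + (n + 1) = (n + 2).choose 2` of them.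
The hypothesis on `k` says exactly `(d + 1).choose 2 ≤ k < (d + 2).choose 2`, so
`k + 1 ≤ latN 1 1 T` holds iff `d ≤ ⌊T⌋₊`, i.e. iff `d ≤ T`, and the infimum is `d`.
-/

open Finset

lemma ncard_setOf_add_le (n : ℕ) : {p : ℕ × ℕ | p.1 + p.2 ≤ n}.ncard = (n + 2).choose 2 := by
  have hset : {p : ℕ × ℕ | p.1 + p.2 ≤ n} = ↑((range (n + 1)).biUnion antidiagonal) := by
    ext p
    simp
  have hdisj : (range (n + 1) : Set ℕ).PairwiseDisjoint antidiagonal := fun i _ j _ hij ↦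
    disjoint_left.2 fun p hi hj ↦ hij ((mem_antidiagonal.1 hi).symm.trans (mem_antidiagonal.1 hj))
  rw [hset, Set.ncard_coe_finset, card_biUnion hdisj]
  simp only [Nat.card_antidiagonal]
  rw [Nat.choose_two_right, ← sum_range_id, sum_range_succ' (fun i ↦ i) (n + 1), add_zero]

lemma latN_one_one {T : ℝ} (hT : 0 ≤ T) : latN 1 1 T = (⌊T⌋₊ + 2).choose 2 := by
  rw [latN, ← ncard_setOf_add_le]
  congr 1
  ext p
  simp only [Set.mem_ofPred_eq, one_mul, Nat.le_floor_iff hT, Nat.cast_add]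

lemma lt_choose_two_iff {d k : ℕ} (hk₁ : (d + 1).choose 2 ≤ k) (hk₂ : k < (d + 2).choose 2)
    (n : ℕ) : k < (n + 2).choose 2 ↔ d ≤ n := by
  refine ⟨fun hk ↦ ?_, fun hdn ↦ hk₂.trans_le (Nat.choose_le_choose 2 (by omega))⟩
  by_contra! hnd
  exact hk.not_ge (le_trans (Nat.choose_le_choose 2 (by omega)) hk₁)

/-- The ECH capacities of the ball `B_4(1)`: for every `d` and every `k` with
`d(d+1)/2 ≤ k ≤ d(d+3)/2` one has `c_k(1,1) = d`.  Hence the sequence `(c_k(1,1))` is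
`0, 1, 1, 2, 2, 2, 3, 3, 3, 3, …`, each integer `d` occurring exactly `d+1` times. -/
theorem ball_capacities (d k : ℕ) (h1 : d * (d + 1) / 2 ≤ k) (h2 : k ≤ d * (d + 3) / 2) :
    ck 1 1 k = (d : ℝ) := by
  have hk₁ : (d + 1).choose 2 ≤ k := by
    rwa [Nat.choose_two_right, Nat.add_sub_cancel, mul_comm]
  have hk₂ : k < (d + 2).choose 2 := by
    have : (d + 1 + 1) * (d + 1) = d * (d + 3) + 2 * 1 := by ring
    rw [show d + 2 = d + 1 + 1 from rfl, Nat.choose_two_right, Nat.add_sub_cancel, this,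
      Nat.add_mul_div_left _ _ two_pos]
    omega
  have hset : {T : ℝ | 0 ≤ T ∧ k + 1 ≤ latN 1 1 T} = Set.Ici (d : ℝ) := by
    ext T
    simp only [Set.mem_ofPred_eq, Set.mem_Ici]
    constructor
    · rintro ⟨hT, hk⟩
      rw [latN_one_one hT, Nat.add_one_le_iff, lt_choose_two_iff hk₁ hk₂] at hk
      exact (Nat.le_floor_iff hT).1 hk
    · intro hdT
      have hT : 0 ≤ T := d.cast_nonneg.trans hdT
      rw [latN_one_one hT, Nat.add_one_le_iff, lt_choose_two_iff hk₁ hk₂]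
      exact ⟨hT, (Nat.le_floor_iff hT).2 hdT⟩
  rw [ck, hset, csInf_Ici]
end

section
/- Let a₁, …, a_m > 0 be real numbers, let b_k := c_k(1,1) denote the ball capacity sequence, and for each k ∈ ℕ define C_k := max{ Σ_{i=1}^m a_i · b_{k_i} : (k₁,…,k_m) ∈ ℕ^m, k₁ + ⋯ + k_m = k } (the ECH capacities of a disjoint union of balls B_4(a₁) ⊔ ⋯ ⊔ B_4(a_m), computed via the disjoint union formula). Then lim_{k→∞} C_k²/k = 2(a₁² + ⋯ + a_m²). (This is the ECH Weyl law for disjoint unions of balls; note that 2Σa_i² equals 2∫ω∧ω for this disjoint union.) -/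
open Filter Finset

lemma latN_one_one_mul_two {T : ℝ} (hT : 0 ≤ T) :
    latN 1 1 T * 2 = (⌊T⌋₊ + 1) * (⌊T⌋₊ + 2) := by
  have hset : {p : ℕ × ℕ | (1 : ℝ) * p.1 + 1 * p.2 ≤ T} =
      ↑((range (⌊T⌋₊ + 1)).biUnion antidiagonal) := by
    ext ⟨x, y⟩
    have hfloor : x + y ≤ ⌊T⌋₊ ↔ (x : ℝ) + y ≤ T := by exact_mod_cast Nat.le_floor_iff hT
    simp only [Set.mem_ofPred_eq, one_mul, coe_biUnion, Set.mem_iUnion, mem_coe, mem_range,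
      HasAntidiagonal.mem_antidiagonal, exists_prop, ← hfloor]
    exact ⟨fun h => ⟨_, Nat.lt_succ_of_le h, rfl⟩, fun ⟨j, hj, hxy⟩ => hxy ▸ Nat.le_of_lt_succ hj⟩
  rw [latN, hset, Set.ncard_coe_finset, card_biUnion]
  · simp only [Finset.Nat.card_antidiagonal]
    induction ⌊T⌋₊ with
    | zero => rfl
    | succ n ih => rw [sum_range_succ, add_mul, ih]; ring
  · intro i _ j _ hij
    simp only [Function.onFun, disjoint_left, HasAntidiagonal.mem_antidiagonal]
    omega

lemma exists_two_mul_lt_succ_mul_succ_succ (k : ℕ) : ∃ d : ℕ, 2 * k < (d + 1) * (d + 2) :=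
  ⟨2 * k, by nlinarith⟩

/-- `ck 1 1 k` as a natural number (`ck_one_one`), using `latN 1 1 d = (d + 1) * (d + 2) / 2`. -/
noncomputable def ballCapacity (k : ℕ) : ℕ := Nat.find (exists_two_mul_lt_succ_mul_succ_succ k)

lemma two_mul_lt_ballCapacity_succ_mul (k : ℕ) :
    2 * k < (ballCapacity k + 1) * (ballCapacity k + 2) :=
  Nat.find_spec (exists_two_mul_lt_succ_mul_succ_succ k)

lemma ballCapacity_le_iff {k d : ℕ} : ballCapacity k ≤ d ↔ 2 * k < (d + 1) * (d + 2) :=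
  ⟨fun h => (two_mul_lt_ballCapacity_succ_mul k).trans_le (Nat.mul_le_mul (by omega) (by omega)),
    Nat.find_min' (exists_two_mul_lt_succ_mul_succ_succ k)⟩

lemma ballCapacity_mul_succ_le (k : ℕ) : ballCapacity k * (ballCapacity k + 1) ≤ 2 * k := by
  cases h : ballCapacity k with
  | zero => simp
  | succ d => simpa [ballCapacity_le_iff, h] using (ballCapacity_le_iff (k := k) (d := d)).not

lemma ck_one_one (k : ℕ) : ck 1 1 k = ballCapacity k := by
  have hset : {T : ℝ | 0 ≤ T ∧ k + 1 ≤ latN 1 1 T} = Set.Ici (ballCapacity k : ℝ) := by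
    ext T
    simp only [Set.mem_ofPred_eq, Set.mem_Ici]
    constructor
    · rintro ⟨hT, hk⟩
      refine (Nat.le_floor_iff hT).mp (ballCapacity_le_iff.mpr ?_)
      rw [← latN_one_one_mul_two hT]
      omega
    · intro h
      have hT : 0 ≤ T := (Nat.cast_nonneg _).trans h
      have hlt := ballCapacity_le_iff.mp ((Nat.le_floor_iff hT).mpr h)
      rw [← latN_one_one_mul_two hT] at hlt
      exact ⟨hT, by omega⟩
  rw [ck, hset, csInf_Ici]

lemma ck_one_one_sq_le (k : ℕ) : ck 1 1 k ^ 2 ≤ 2 * k := by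
  rw [ck_one_one]
  exact_mod_cast (by nlinarith [ballCapacity_mul_succ_le k] : ballCapacity k ^ 2 ≤ 2 * k)

lemma sub_two_le_ck_one_one {x : ℝ} {k : ℕ} (hx : x ^ 2 ≤ 2 * (k + 1)) : x - 2 ≤ ck 1 1 k := by
  have hsq : x ^ 2 ≤ (ck 1 1 k + 2) ^ 2 := by
    refine hx.trans ?_
    rw [ck_one_one]
    exact_mod_cast (by nlinarith [two_mul_lt_ballCapacity_succ_mul k] :
      2 * (k + 1) ≤ (ballCapacity k + 2) ^ 2)
  have hnonneg : 0 ≤ ck 1 1 k + 2 := by rw [ck_one_one]; positivity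
  linarith [(abs_le_of_sq_le_sq' hsq hnonneg).2]

lemma exists_le_sum_eq_of_sum_le {ι : Type*} [Fintype ι] [Nonempty ι] {n : ι → ℕ} {k : ℕ}
    (h : ∑ i, n i ≤ k) : ∃ κ : ι → ℕ, ∑ i, κ i = k ∧ n ≤ κ := by
  classical
  obtain ⟨i₀⟩ := ‹Nonempty ι›
  refine ⟨n + Pi.single i₀ (k - ∑ i, n i), ?_, fun i => Nat.le_add_right _ _⟩
  simp only [Pi.add_apply, sum_add_distrib, sum_pi_single', mem_univ, if_true]
  omega

section UnionCapacity

variable {ι : Type*} [Fintype ι]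

noncomputable def unionCapacity (a : ι → ℝ) (k : ℕ) : ℝ :=
  sSup {s : ℝ | ∃ κ : ι → ℕ, (∑ i, κ i) = k ∧ s = ∑ i, a i * ck 1 1 (κ i)}

lemma sum_mul_ck_one_one_le (a : ι → ℝ) (κ : ι → ℕ) :
    ∑ i, a i * ck 1 1 (κ i) ≤ √(2 * ∑ i, a i ^ 2) * √(∑ i, κ i : ℕ) := by
  have hb : ∑ i, ck 1 1 (κ i) ^ 2 ≤ 2 * (∑ i, κ i : ℕ) := by
    push_cast
    rw [mul_sum]
    exact sum_le_sum fun i _ => ck_one_one_sq_le (κ i)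
  calc ∑ i, a i * ck 1 1 (κ i)
      ≤ √(∑ i, a i ^ 2) * √(∑ i, ck 1 1 (κ i) ^ 2) := Real.sum_mul_le_sqrt_mul_sqrt _ _ _
    _ ≤ √(∑ i, a i ^ 2) * √(2 * (∑ i, κ i : ℕ)) := by gcongr
    _ = √(2 * ∑ i, a i ^ 2) * √(∑ i, κ i : ℕ) := by
      rw [Real.sqrt_mul zero_le_two, Real.sqrt_mul zero_le_two]
      ring

lemma unionCapacity_le (a : ι → ℝ) (k : ℕ) : unionCapacity a k ≤ √(2 * ∑ i, a i ^ 2) * √k :=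
  Real.sSup_le (by rintro _ ⟨κ, rfl, rfl⟩; exact sum_mul_ck_one_one_le a κ) (by positivity)

lemma le_unionCapacity (a : ι → ℝ) {k : ℕ} {κ : ι → ℕ} (hκ : ∑ i, κ i = k) :
    ∑ i, a i * ck 1 1 (κ i) ≤ unionCapacity a k :=
  le_csSup ⟨√(2 * ∑ i, a i ^ 2) * √k, by
    rintro _ ⟨κ', hκ', rfl⟩
    rw [← hκ']
    exact sum_mul_ck_one_one_le a κ'⟩ ⟨κ, hκ, rfl⟩

/-- Split `k` proportionally to the volumes, `κ i ≈ k * a i ^ 2 / S` with `S = ∑ j, a j ^ 2`,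
so that `a i * ck 1 1 (κ i) ≈ a i ^ 2 * √(2 * k / S)`. -/
lemma sqrt_mul_sqrt_sub_le_unionCapacity {a : ι → ℝ} (ha : ∀ i, 0 < a i) (k : ℕ) :
    √(2 * ∑ i, a i ^ 2) * √k - 2 * ∑ i, a i ≤ unionCapacity a k := by
  rcases isEmpty_or_nonempty ι with hι | hι
  · simp only [univ_eq_empty, sum_empty, mul_zero, Real.sqrt_zero, zero_mul, sub_zero]
    exact Real.sSup_nonneg (by rintro _ ⟨κ, -, rfl⟩; simp)
  set S := ∑ i, a i ^ 2
  have hS : 0 < S := sum_pos (fun i _ => pow_pos (ha i) 2) univ_nonempty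
  have hSr : S * (√(2 * k) / √S) = √(2 * S) * √k := by
    rw [Real.sqrt_mul zero_le_two, Real.sqrt_mul zero_le_two]
    field_simp
    rw [Real.sq_sqrt hS.le, mul_comm]
  set r := √(2 * k) / √S
  have hsum : ∑ i, (a i * r) ^ 2 / 2 = (k : ℝ) := by
    rw [← sum_div]
    simp only [mul_pow, ← sum_mul]
    rw [div_pow, Real.sq_sqrt hS.le, Real.sq_sqrt (by positivity)]
    field_simp
    exact mul_comm _ _
  obtain ⟨κ, hκ, hnκ⟩ := exists_le_sum_eq_of_sum_le (k := k)
    (n := fun i => ⌊(a i * r) ^ 2 / 2⌋₊) (by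
      rw [← Nat.cast_le (α := ℝ), ← hsum]
      push_cast
      exact sum_le_sum fun i _ => Nat.floor_le (by positivity))
  have hκi (i : ι) : (a i * r) ^ 2 ≤ 2 * (κ i + 1) := by
    have hlt := Nat.lt_floor_add_one ((a i * r) ^ 2 / 2)
    have hle : (⌊(a i * r) ^ 2 / 2⌋₊ : ℝ) ≤ κ i := by exact_mod_cast hnκ i
    linarith
  calc √(2 * S) * √k - 2 * ∑ i, a i = S * r - 2 * ∑ i, a i := by rw [hSr]
    _ = ∑ i, a i * (a i * r - 2) := by
        rw [sum_mul, mul_sum, ← sum_sub_distrib]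
        exact sum_congr rfl fun i _ => by ring
    _ ≤ ∑ i, a i * ck 1 1 (κ i) :=
        sum_le_sum fun i _ => mul_le_mul_of_nonneg_left (sub_two_le_ck_one_one (hκi i)) (ha i).le
    _ ≤ unionCapacity a k := le_unionCapacity a hκ

end UnionCapacity

lemma tendsto_sq_div_of_le_mul_sqrt {f : ℕ → ℝ} {c C : ℝ} (hlow : ∀ k : ℕ, c * √k - C ≤ f k)
    (hup : ∀ k : ℕ, f k ≤ c * √k) : Tendsto (fun k : ℕ => f k ^ 2 / k) atTop (nhds (c ^ 2)) := by
  have hsqrt : Tendsto (fun k : ℕ => √(k : ℝ)) atTop atTop :=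
    Real.tendsto_sqrt_atTop.comp tendsto_natCast_atTop_atTop
  have hlim : Tendsto (fun k : ℕ => f k / √k) atTop (nhds c) := by
    have hl : Tendsto (fun k : ℕ => c - C / √k) atTop (nhds c) := by
      simpa using tendsto_const_nhds.sub (hsqrt.const_div_atTop C)
    refine tendsto_of_tendsto_of_tendsto_of_le_of_le' hl tendsto_const_nhds ?_ ?_ <;>
      filter_upwards [hsqrt.eventually_gt_atTop 0] with k hk
    · rw [le_div_iff₀ hk, sub_mul, div_mul_cancel₀ _ hk.ne']
      exact hlow k
    · rw [div_le_iff₀ hk]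
      exact hup k
  simpa [div_pow, Real.sq_sqrt (Nat.cast_nonneg _)] using hlim.pow 2

/-- The ECH Weyl law for a disjoint union of balls `B_4(a₁) ⊔ ⋯ ⊔ B_4(a_m)`: with
`b_k := c_k(1,1)` the ball capacity sequence and
`C_k := max { Σ_i a_i·b_{k_i} : k₁ + ⋯ + k_m = k }` (the disjoint union formula for ECH
capacities), one has `lim_{k→∞} C_k²/k = 2(a₁² + ⋯ + a_m²)`. -/
theorem disjoint_union_of_balls_weyl_law (m : ℕ) (a : Fin m → ℝ) (ha : ∀ i, 0 < a i) :
    Filter.Tendsto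
      (fun k : ℕ =>
        (sSup {s : ℝ | ∃ κ : Fin m → ℕ, (∑ i, κ i) = k ∧ s = ∑ i, a i * ck 1 1 (κ i)}) ^ 2
          / (k : ℝ))
      Filter.atTop (nhds (2 * ∑ i, (a i) ^ 2)) := by
  have h := tendsto_sq_div_of_le_mul_sqrt (sqrt_mul_sqrt_sub_le_unionCapacity ha)
    (unionCapacity_le a)
  rwa [Real.sq_sqrt (by positivity)] at h
end
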